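/- For all k, ℓ ∈ ℤ² ∖ {(0,0)}, with a = (k₂ℓ₁ − k₁ℓ₂)/(|k||ℓ|), one has 𝒵^{0,1}_{k,ℓ}(x) + 𝒵^{0,1}_{ℓ,k}(x) = a·cos((k−ℓ)·x)·(k₂ − ℓ₂, ℓ₁ − k₁) for all x ∈ ℝ²; moreover, if k ≠ ℓ then ⟨𝒵^{0,1}_{k,ℓ} + 𝒵^{0,1}_{ℓ,k}, e^0_{k−ℓ}⟩_{L²} = 2π²·a·|k−ℓ|. -/

import Mathlib

/-- Euclidean norm of an integer vector. -/
noncomputable def znorm (k : ℤ × ℤ) : ℝ := Real.sqrt ((k.1 : ℝ) ^ 2 + (k.2 : ℝ) ^ 2)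

/-- The pairing `k · x = k₁x₁ + k₂x₂`. -/
noncomputable def kdot (k : ℤ × ℤ) (x : ℝ × ℝ) : ℝ := (k.1 : ℝ) * x.1 + (k.2 : ℝ) * x.2

/-- The vector field `e_k^0(x) = (k₂/|k|, −k₁/|k|)·cos(k·x)`. -/
noncomputable def e0 (k : ℤ × ℤ) : ℝ × ℝ → ℝ × ℝ := fun x =>
  (((k.2 : ℝ) / znorm k) * Real.cos (kdot k x), (-(k.1 : ℝ) / znorm k) * Real.cos (kdot k x))

/-- The vector field `e_k^1(x) = (−k₂/|k|, k₁/|k|)·sin(k·x)`. -/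
noncomputable def e1 (k : ℤ × ℤ) : ℝ × ℝ → ℝ × ℝ := fun x =>
  ((-(k.2 : ℝ) / znorm k) * Real.sin (kdot k x), ((k.1 : ℝ) / znorm k) * Real.sin (kdot k x))

/-- The advection `b(u,v) = (u·∇)v`, i.e. the derivative of `v` in the direction `u`. -/
noncomputable def adv (u v : ℝ × ℝ → ℝ × ℝ) : ℝ × ℝ → ℝ × ℝ := fun x => fderiv ℝ v x (u x)

/-- The `L²` pairing `⟨f,g⟩ = ∫_{[−π,π]²} f(x)·g(x) dx`. -/
noncomputable def pairL2 (f g : ℝ × ℝ → ℝ × ℝ) : ℝ :=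
  ∫ x in Set.Icc ((-Real.pi, -Real.pi) : ℝ × ℝ) ((Real.pi, Real.pi) : ℝ × ℝ),
    ((f x).1 * (g x).1 + (f x).2 * (g x).2)

/-- `𝒥^{0,1}_{k,ℓ} = b(e_k^0, e_ℓ^1) + b(e_ℓ^1, e_k^0)`. -/
noncomputable def J01 (k l : ℤ × ℤ) : ℝ × ℝ → ℝ × ℝ := fun x =>
  adv (e0 k) (e1 l) x + adv (e1 l) (e0 k) x

/-- `𝒥^{0,0}_{k,ℓ} = b(e_k^0, e_ℓ^0) + b(e_ℓ^0, e_k^0)`. -/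
noncomputable def J00 (k l : ℤ × ℤ) : ℝ × ℝ → ℝ × ℝ := fun x =>
  adv (e0 k) (e0 l) x + adv (e0 l) (e0 k) x

/-- `𝒥^{1,1}_{k,ℓ} = b(e_k^1, e_ℓ^1) + b(e_ℓ^1, e_k^1)`. -/
noncomputable def J11 (k l : ℤ × ℤ) : ℝ × ℝ → ℝ × ℝ := fun x =>
  adv (e1 k) (e1 l) x + adv (e1 l) (e1 k) x

/-- `𝒵^{0,1}_{k,ℓ} = b(e_k^0, e_ℓ^1) − b(e_ℓ^1, e_k^0)`. -/
noncomputable def Z01 (k l : ℤ × ℤ) : ℝ × ℝ → ℝ × ℝ := fun x =>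
  adv (e0 k) (e1 l) x - adv (e1 l) (e0 k) x

/-- `𝒵^{0,0}_{k,ℓ} = b(e_k^0, e_ℓ^0) − b(e_ℓ^0, e_k^0)`. -/
noncomputable def Z00 (k l : ℤ × ℤ) : ℝ × ℝ → ℝ × ℝ := fun x =>
  adv (e0 k) (e0 l) x - adv (e0 l) (e0 k) x

/-- `𝒵^{1,1}_{k,ℓ} = b(e_k^1, e_ℓ^1) − b(e_ℓ^1, e_k^1)`. -/
noncomputable def Z11 (k l : ℤ × ℤ) : ℝ × ℝ → ℝ × ℝ := fun x =>
  adv (e1 k) (e1 l) x - adv (e1 l) (e1 k) x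

open Real MeasureTheory intervalIntegral

noncomputable def Lk (k : ℤ × ℤ) : (ℝ × ℝ) →L[ℝ] ℝ :=
  (k.1 : ℝ) • ContinuousLinearMap.fst ℝ ℝ ℝ + (k.2 : ℝ) • ContinuousLinearMap.snd ℝ ℝ ℝ

lemma Lk_apply (k : ℤ × ℤ) (w : ℝ × ℝ) : Lk k w = kdot k w := by
  simp [Lk, kdot, smul_eq_mul]

lemma hasFDerivAt_kdot (k : ℤ × ℤ) (x : ℝ × ℝ) : HasFDerivAt (kdot k) (Lk k) x := by
  have h1 : HasFDerivAt (fun x : ℝ × ℝ => (k.1 : ℝ) * x.1)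
      ((k.1 : ℝ) • ContinuousLinearMap.fst ℝ ℝ ℝ) x := (hasFDerivAt_fst).const_mul _
  have h2 : HasFDerivAt (fun x : ℝ × ℝ => (k.2 : ℝ) * x.2)
      ((k.2 : ℝ) • ContinuousLinearMap.snd ℝ ℝ ℝ) x := (hasFDerivAt_snd).const_mul _
  exact h1.add h2

lemma hasFDerivAt_cos_kdot (c : ℝ) (k : ℤ × ℤ) (x : ℝ × ℝ) :
    HasFDerivAt (fun x => c * Real.cos (kdot k x))
      (c • ((-Real.sin (kdot k x)) • Lk k)) x := by
  exact ((Real.hasDerivAt_cos (kdot k x)).comp_hasFDerivAt x (hasFDerivAt_kdot k x)).const_mul c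

lemma hasFDerivAt_sin_kdot (c : ℝ) (k : ℤ × ℤ) (x : ℝ × ℝ) :
    HasFDerivAt (fun x => c * Real.sin (kdot k x))
      (c • ((Real.cos (kdot k x)) • Lk k)) x := by
  exact ((Real.hasDerivAt_sin (kdot k x)).comp_hasFDerivAt x (hasFDerivAt_kdot k x)).const_mul c

lemma fderiv_e0_apply (k : ℤ × ℤ) (x w : ℝ × ℝ) :
    fderiv ℝ (e0 k) x w =
      (((k.2 : ℝ) / znorm k) * (-Real.sin (kdot k x)) * kdot k w,
       ((-(k.1 : ℝ)) / znorm k) * (-Real.sin (kdot k x)) * kdot k w) := by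
  have h := (HasFDerivAt.prodMk (hasFDerivAt_cos_kdot ((k.2 : ℝ) / znorm k) k x)
    (hasFDerivAt_cos_kdot ((-(k.1 : ℝ)) / znorm k) k x))
  have : fderiv ℝ (e0 k) x = _ := h.fderiv
  rw [show e0 k = (fun x => (((k.2 : ℝ) / znorm k) * Real.cos (kdot k x),
      ((-(k.1 : ℝ)) / znorm k) * Real.cos (kdot k x))) from rfl] at this ⊢
  rw [this]
  simp [Lk_apply, smul_eq_mul]; constructor <;> ring

lemma fderiv_e1_apply (k : ℤ × ℤ) (x w : ℝ × ℝ) :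
    fderiv ℝ (e1 k) x w =
      (((-(k.2 : ℝ)) / znorm k) * (Real.cos (kdot k x)) * kdot k w,
       (((k.1 : ℝ)) / znorm k) * (Real.cos (kdot k x)) * kdot k w) := by
  have h := (HasFDerivAt.prodMk (hasFDerivAt_sin_kdot ((-(k.2 : ℝ)) / znorm k) k x)
    (hasFDerivAt_sin_kdot (((k.1 : ℝ)) / znorm k) k x))
  have : fderiv ℝ (e1 k) x = _ := h.fderiv
  rw [show e1 k = (fun x => (((-(k.2 : ℝ)) / znorm k) * Real.sin (kdot k x),
      (((k.1 : ℝ)) / znorm k) * Real.sin (kdot k x))) from rfl] at this ⊢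
  rw [this]
  simp [Lk_apply, smul_eq_mul]; constructor <;> ring

lemma kdot_sub (k l : ℤ × ℤ) (x : ℝ × ℝ) : kdot (k - l) x = kdot k x - kdot l x := by
  simp [kdot]; ring

lemma kdot_mk (m : ℤ × ℤ) (u v : ℝ) : kdot m (u, v) = (m.1 : ℝ) * u + (m.2 : ℝ) * v := rfl

lemma Z01_sum (k l : ℤ × ℤ) (a : ℝ)
    (ha : a = ((k.2 : ℝ) * (l.1 : ℝ) - (k.1 : ℝ) * (l.2 : ℝ)) / (znorm k * znorm l)) (x : ℝ × ℝ) :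
    Z01 k l x + Z01 l k x =
      (a * Real.cos (kdot (k - l) x) * ((k.2 : ℝ) - (l.2 : ℝ)),
       a * Real.cos (kdot (k - l) x) * ((l.1 : ℝ) - (k.1 : ℝ))) := by
  have e0v : ∀ (m : ℤ × ℤ) x, e0 m x = (((m.2 : ℝ) / znorm m) * Real.cos (kdot m x),
      (-(m.1 : ℝ) / znorm m) * Real.cos (kdot m x)) := fun _ _ => rfl
  have e1v : ∀ (m : ℤ × ℤ) x, e1 m x = ((-(m.2 : ℝ) / znorm m) * Real.sin (kdot m x),
      ((m.1 : ℝ) / znorm m) * Real.sin (kdot m x)) := fun _ _ => rfl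
  simp only [Z01, adv, fderiv_e0_apply, fderiv_e1_apply, e0v, e1v, kdot_sub,
    Real.cos_sub, ha, Prod.mk_add_mk, Prod.mk_sub_mk, Prod.mk.injEq, kdot_mk]
  constructor <;> ring

lemma znorm_pos' (u v : ℤ) (h : ¬(u = 0 ∧ v = 0)) :
    0 < Real.sqrt ((u : ℝ) ^ 2 + (v : ℝ) ^ 2) := by
  apply Real.sqrt_pos.mpr
  rcases not_and_or.mp h with h | h
  · have h1 : (1:ℝ) ≤ (u:ℝ)^2 := by
      have h2 : (1:ℤ) ≤ u^2 := by
        rcases lt_or_gt_of_ne h with h' | h' <;> nlinarith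
      exact_mod_cast h2
    nlinarith [sq_nonneg (v:ℝ)]
  · have h1 : (1:ℝ) ≤ (v:ℝ)^2 := by
      have h2 : (1:ℤ) ≤ v^2 := by
        rcases lt_or_gt_of_ne h with h' | h' <;> nlinarith
      exact_mod_cast h2
    nlinarith [sq_nonneg (u:ℝ)]

/-- `∫_{-π}^{π} cos(m t + c)² dt = π` for integer `m ≠ 0`. -/
lemma integral_cos_sq_shift (m : ℤ) (hm : m ≠ 0) (c : ℝ) :
    ∫ t in Set.Icc (-Real.pi) Real.pi, Real.cos ((m : ℝ) * t + c) ^ 2 = Real.pi := by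
  have hm' : (m : ℝ) ≠ 0 := Int.cast_ne_zero.mpr hm
  have hle : -Real.pi ≤ Real.pi := by linarith [Real.pi_pos]
  rw [MeasureTheory.integral_Icc_eq_integral_Ioc, ← intervalIntegral.integral_of_le hle]
  set F : ℝ → ℝ := fun t => t / 2 + Real.sin (2 * ((m : ℝ) * t + c)) / (4 * m) with hF
  have hderiv : ∀ t ∈ Set.uIcc (-Real.pi) Real.pi,
      HasDerivAt F (Real.cos ((m : ℝ) * t + c) ^ 2) t := by
    intro t _
    have h1 : HasDerivAt (fun t : ℝ => t / 2) (1 / 2) t := by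
      simpa using (hasDerivAt_id t).div_const 2
    have h2 : HasDerivAt (fun t : ℝ => 2 * ((m : ℝ) * t + c)) (2 * (m : ℝ)) t := by
      have : HasDerivAt (fun t : ℝ => (m : ℝ) * t + c) ((m : ℝ)) t := by
        simpa using ((hasDerivAt_id t).const_mul (m : ℝ)).add_const c
      simpa using this.const_mul 2
    have h3 : HasDerivAt (fun t : ℝ => Real.sin (2 * ((m : ℝ) * t + c)))
        (Real.cos (2 * ((m : ℝ) * t + c)) * (2 * (m : ℝ))) t :=
      (Real.hasDerivAt_sin _).comp t h2
    have h4 := h1.add (h3.div_const (4 * (m : ℝ)))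
    refine h4.congr_deriv ?_
    rw [Real.cos_sq]
    field_simp
    ring
  have hcont : ContinuousOn (fun t => Real.cos ((m : ℝ) * t + c) ^ 2)
      (Set.uIcc (-Real.pi) Real.pi) := by fun_prop
  rw [intervalIntegral.integral_eq_sub_of_hasDerivAt hderiv
    (hcont.intervalIntegrable)]
  have h5 : 2 * ((m : ℝ) * Real.pi + c) = 2 * c + (m : ℤ) * (2 * Real.pi) := by push_cast; ring
  have h6 : 2 * ((m : ℝ) * (-Real.pi) + c) = 2 * c + (-m : ℤ) * (2 * Real.pi) := by
    push_cast; ring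
  rw [hF]
  simp only [h5, h6, Real.sin_add_int_mul_two_pi]
  ring

lemma integral_const_Icc (C : ℝ) :
    ∫ _ in Set.Icc (-Real.pi) Real.pi, C = 2 * Real.pi * C := by
  rw [MeasureTheory.setIntegral_const]
  rw [measureReal_def, Real.volume_Icc]
  rw [ENNReal.toReal_ofReal (by linarith [Real.pi_pos] : (0:ℝ) ≤ Real.pi - -Real.pi)]
  rw [smul_eq_mul]; ring

lemma integral2_cos_sq (m : ℤ × ℤ) (hm : m ≠ (0, 0)) :
    ∫ x in Set.Icc ((-Real.pi, -Real.pi) : ℝ × ℝ) ((Real.pi, Real.pi) : ℝ × ℝ),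
      Real.cos (kdot m x) ^ 2 = 2 * Real.pi ^ 2 := by
  have hIcc : Set.Icc ((-Real.pi, -Real.pi) : ℝ × ℝ) ((Real.pi, Real.pi) : ℝ × ℝ) =
      Set.Icc (-Real.pi) Real.pi ×ˢ Set.Icc (-Real.pi) Real.pi := by
    rw [Set.Icc_prod_eq]
  have hcont : Continuous fun x : ℝ × ℝ => Real.cos (kdot m x) ^ 2 := by
    unfold kdot; fun_prop
  have hint : IntegrableOn (fun x : ℝ × ℝ => Real.cos (kdot m x) ^ 2)
      (Set.Icc (-Real.pi) Real.pi ×ˢ Set.Icc (-Real.pi) Real.pi) volume :=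
    hcont.continuousOn.integrableOn_compact (isCompact_Icc.prod isCompact_Icc)
  rw [hIcc, MeasureTheory.Measure.volume_eq_prod, MeasureTheory.setIntegral_prod _
    (by rwa [← MeasureTheory.Measure.volume_eq_prod])]
  by_cases h2 : m.2 = 0
  · have h1 : m.1 ≠ 0 := by
      intro h1; exact hm (Prod.ext h1 h2)
    have hinner : ∀ x : ℝ,
        (∫ y in Set.Icc (-Real.pi) Real.pi, Real.cos (kdot m (x, y)) ^ 2)
          = 2 * Real.pi * Real.cos ((m.1 : ℝ) * x + 0) ^ 2 := by
      intro x
      have : ∀ y : ℝ, Real.cos (kdot m (x, y)) ^ 2 = Real.cos ((m.1 : ℝ) * x + 0) ^ 2 := by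
        intro y; simp [kdot, h2]
      simp_rw [this]
      exact integral_const_Icc _
    simp_rw [hinner]
    rw [MeasureTheory.integral_const_mul, integral_cos_sq_shift m.1 h1 0]
    ring
  · have hinner : ∀ x : ℝ,
        (∫ y in Set.Icc (-Real.pi) Real.pi, Real.cos (kdot m (x, y)) ^ 2) = Real.pi := by
      intro x
      have : ∀ y : ℝ, Real.cos (kdot m (x, y)) ^ 2
          = Real.cos ((m.2 : ℝ) * y + (m.1 : ℝ) * x) ^ 2 := by
        intro y; simp [kdot]; ring_nf
      simp_rw [this]
      exact integral_cos_sq_shift m.2 h2 _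
    simp_rw [hinner]
    rw [integral_const_Icc]
    ring

theorem Z01_sum_identity_and_pairing (k l : ℤ × ℤ) (hk : k ≠ (0, 0)) (hl : l ≠ (0, 0))
    (a : ℝ) (ha : a = ((k.2 : ℝ) * (l.1 : ℝ) - (k.1 : ℝ) * (l.2 : ℝ)) / (znorm k * znorm l)) :
    (∀ x : ℝ × ℝ,
      Z01 k l x + Z01 l k x =
        (a * Real.cos (kdot (k - l) x) * ((k.2 : ℝ) - (l.2 : ℝ)),
         a * Real.cos (kdot (k - l) x) * ((l.1 : ℝ) - (k.1 : ℝ)))) ∧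
    (k ≠ l →
      pairL2 (fun x => Z01 k l x + Z01 l k x) (e0 (k - l)) =
        2 * Real.pi ^ 2 * a * znorm (k - l)) := by
  refine ⟨Z01_sum k l a ha, fun hkl => ?_⟩
  set m := k - l with hm
  have hm0 : m ≠ (0, 0) := by
    intro h
    apply hkl
    have : k - l = 0 := by rw [hm] at h; exact h
    exact sub_eq_zero.mp this
  have hmc : ¬(m.1 = 0 ∧ m.2 = 0) := by
    intro ⟨h1, h2⟩; exact hm0 (Prod.ext h1 h2)
  have hz : 0 < znorm m := znorm_pos' m.1 m.2 hmc
  have hz' : znorm m ≠ 0 := ne_of_gt hz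
  have hsq : ((m.1 : ℝ)) ^ 2 + ((m.2 : ℝ)) ^ 2 = znorm m ^ 2 := by
    rw [znorm, Real.sq_sqrt (by positivity)]
  have hm1 : ((m.1 : ℝ)) = (k.1 : ℝ) - (l.1 : ℝ) := by
    rw [hm]; push_cast [Prod.fst_sub]; ring
  have hm2 : ((m.2 : ℝ)) = (k.2 : ℝ) - (l.2 : ℝ) := by
    rw [hm]; push_cast [Prod.snd_sub]; ring
  have hfun : ∀ x : ℝ × ℝ,
      ((Z01 k l x + Z01 l k x).1 * (e0 m x).1 + (Z01 k l x + Z01 l k x).2 * (e0 m x).2)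
        = (a * znorm m) * Real.cos (kdot m x) ^ 2 := by
    intro x
    rw [Z01_sum k l a ha x]
    show (a * Real.cos (kdot m x) * ((k.2 : ℝ) - (l.2 : ℝ)))
        * (((m.2 : ℝ) / znorm m) * Real.cos (kdot m x))
      + (a * Real.cos (kdot m x) * ((l.1 : ℝ) - (k.1 : ℝ)))
        * ((-(m.1 : ℝ) / znorm m) * Real.cos (kdot m x))
      = (a * znorm m) * Real.cos (kdot m x) ^ 2
    rw [hm1, hm2] at hsq ⊢
    field_simp
    linear_combination (a * Real.cos (kdot m x) ^ 2) * hsq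
  unfold pairL2
  rw [MeasureTheory.integral_congr_ae (Filter.Eventually.of_forall
    (fun x => hfun x))]
  rw [MeasureTheory.integral_const_mul, integral2_cos_sq m hm0]
  ring
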